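/- arXiv:0810.3277 — 2 statements merged into one kernel-verified Lean document; each statement's English description precedes it below -/
import Mathlib

section
/- (Theorem 3, second part) Fix x₀ ∈ ℝ and suppose sup_n ‖T_n(x₀)‖² = C < ∞. Then for all z ∈ ℂ and all n ≥ 0, ‖T_n(x₀ + z/(n+1))‖ ≤ C^{1/2} exp(C α_-^{−1} |z|). -/
open scoped Matrix.Norms.L2Operator

/-!
Write `w = z / (n + 1)`. Since `A_j(x₀ + w) = A_j(x₀) + diag(w / a_j, 0)`, variation of constants
gives `T_n(x₀ + w) = T_n(x₀) (1 + ∑_{j<n} T_{j+1}(x₀)⁻¹ diag(w / a_{j+1}, 0) T_j(x₀ + w))`.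
A `2 × 2` matrix of determinant one has `A⁻¹ = adj A = J Aᵀ J⁻¹` with `J` unitary, so
`‖T_{j+1}(x₀)⁻¹‖ = ‖T_{j+1}(x₀)‖ ≤ √C` and each summand is at most `√C |w| / α₋ ‖T_j(x₀ + w)‖`.
The discrete Gronwall inequality then gives
`‖T_n(x₀ + w)‖ ≤ √C (1 + C |w| / α₋)ⁿ ≤ √C exp(n C |w| / α₋) ≤ √C exp(C |z| / α₋)`.
-/

/-- The one-step matrix `A_j(z)` built from Jacobi parameters. -/
noncomputable def jacobiA (a b : ℕ → ℝ) (j : ℕ) (z : ℂ) : Matrix (Fin 2) (Fin 2) ℂ :=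
  !![(z - (b j : ℂ)) / (a j : ℂ), -1 / (a j : ℂ); ((a j : ℂ)), 0]

/-- The transfer matrix `T_n(z) = A_n(z) ⋯ A_1(z)`, with `T_0(z) = I`. -/
noncomputable def transfer (a b : ℕ → ℝ) : ℕ → ℂ → Matrix (Fin 2) (Fin 2) ℂ
  | 0 => fun _ => 1
  | n + 1 => fun z => jacobiA a b (n + 1) z * transfer a b n z

lemma EuclideanSpace.norm_toLp_star {𝕜 ι : Type*} [RCLike 𝕜] [Fintype ι] (v : ι → 𝕜) :
    ‖WithLp.toLp 2 (star v)‖ = ‖WithLp.toLp 2 v‖ := by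
  simp [EuclideanSpace.norm_eq]

namespace Matrix

variable {𝕜 : Type*} [RCLike 𝕜] {m n : Type*} [Fintype m] [Fintype n] [DecidableEq n]

lemma l2_opNorm_map_star_le (A : Matrix m n 𝕜) : ‖A.map star‖ ≤ ‖A‖ := by
  rw [l2_opNorm_def]
  refine ContinuousLinearMap.opNorm_le_bound _ (norm_nonneg A) fun x => ?_
  have hmap : (A.map star) *ᵥ x.ofLp = star (A *ᵥ star x.ofLp) := by
    ext i; simp [mulVec, dotProduct]
  calc _ = ‖WithLp.toLp 2 (star (A *ᵥ star x.ofLp))‖ := by rw [← hmap]; rfl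
    _ = ‖WithLp.toLp 2 (A *ᵥ star x.ofLp)‖ := EuclideanSpace.norm_toLp_star _
    _ ≤ ‖A‖ * ‖WithLp.toLp 2 (star x.ofLp)‖ := l2_opNorm_mulVec A _
    _ = ‖A‖ * ‖x‖ := by rw [EuclideanSpace.norm_toLp_star]

lemma l2_opNorm_map_star (A : Matrix m n 𝕜) : ‖A.map star‖ = ‖A‖ := by
  refine le_antisymm (l2_opNorm_map_star_le A) ?_
  have := l2_opNorm_map_star_le (A.map star)
  rwa [map_map, star_involutive.comp_self, map_id] at this

lemma l2_opNorm_transpose [DecidableEq m] (A : Matrix m n 𝕜) : ‖Aᵀ‖ = ‖A‖ := by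
  rw [← l2_opNorm_conjTranspose A, conjTranspose, l2_opNorm_map_star]

lemma adjugate_fin_two_eq_mul_transpose_mul (A : Matrix (Fin 2) (Fin 2) 𝕜) :
    A.adjugate = !![0, 1; -1, 0] * Aᵀ * star !![0, 1; -1, 0] := by
  rw [adjugate_fin_two]
  ext i j; fin_cases i <;> fin_cases j <;>
    simp [mul_apply, Fin.sum_univ_two, star_eq_conjTranspose, vecMul, dotProduct]

lemma l2_opNorm_adjugate_fin_two (A : Matrix (Fin 2) (Fin 2) 𝕜) : ‖A.adjugate‖ = ‖A‖ := by
  have hJ : !![0, 1; -1, 0] ∈ unitary (Matrix (Fin 2) (Fin 2) 𝕜) := by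
    rw [Unitary.mem_iff]
    constructor <;> ext i j <;> fin_cases i <;> fin_cases j <;>
      simp [mul_apply, Fin.sum_univ_two, star_eq_conjTranspose]
  let J : unitary (Matrix (Fin 2) (Fin 2) 𝕜) := ⟨_, hJ⟩
  have hadj : A.adjugate = J * Aᵀ * (star J : unitary _) := by
    rw [Unitary.coe_star]
    exact adjugate_fin_two_eq_mul_transpose_mul A
  rw [hadj, CStarRing.norm_mul_coe_unitary, CStarRing.norm_coe_unitary_mul, l2_opNorm_transpose]

lemma l2_opNorm_inv_fin_two_of_det_eq_one {A : Matrix (Fin 2) (Fin 2) 𝕜} (hA : A.det = 1) :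
    ‖A⁻¹‖ = ‖A‖ := by
  rw [inv_def, hA, Ring.inverse_one, one_smul, l2_opNorm_adjugate_fin_two]

lemma l2_opNorm_diagonal_cons_zero (c : 𝕜) : ‖diagonal ![c, 0]‖ = ‖c‖ := by
  rw [l2_opNorm_diagonal]
  refine le_antisymm ?_ (norm_le_pi_norm ![c, 0] 0)
  exact (pi_norm_le_iff_of_nonneg (norm_nonneg c)).2 (Fin.forall_fin_two.2 ⟨le_rfl, by simp⟩)

variable {R ι : Type*} [CommRing R] [Fintype ι] [DecidableEq ι]

lemma nonsing_inv_mul_eq_add_sum {A B T S : ℕ → Matrix ι ι R} (hT : ∀ j, IsUnit (T j).det)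
    (hTs : ∀ j, T (j + 1) = A j * T j) (hSs : ∀ j, S (j + 1) = (A j + B j) * S j) (n : ℕ) :
    (T n)⁻¹ * S n = (T 0)⁻¹ * S 0 + ∑ j ∈ Finset.range n, (T (j + 1))⁻¹ * B j * S j := by
  have hstep (j : ℕ) : (T (j + 1))⁻¹ * A j = (T j)⁻¹ := by
    calc (T (j + 1))⁻¹ * A j = (T (j + 1))⁻¹ * (A j * T j) * (T j)⁻¹ := by
          rw [Matrix.mul_assoc, Matrix.mul_assoc, mul_nonsing_inv _ (hT j), Matrix.mul_one]
      _ = (T j)⁻¹ := by rw [← hTs, nonsing_inv_mul _ (hT _), Matrix.one_mul]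
  rw [← sub_eq_iff_eq_add', ← Finset.sum_range_sub (fun j => (T j)⁻¹ * S j)]
  refine Finset.sum_congr rfl fun j _ => ?_
  rw [hSs, Matrix.add_mul, Matrix.mul_add, ← Matrix.mul_assoc, hstep, ← Matrix.mul_assoc]
  abel

end Matrix

lemma le_mul_one_add_pow_of_le_add_mul_sum {u : ℕ → ℝ} {c K : ℝ} (hK : 0 ≤ K)
    (hu : ∀ n, u n ≤ c + K * ∑ j ∈ Finset.range n, u j) (n : ℕ) : u n ≤ c * (1 + K) ^ n := by
  induction n using Nat.strong_induction_on with
  | _ n ih =>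
    calc u n ≤ c + K * ∑ j ∈ Finset.range n, u j := hu n
      _ ≤ c + K * ∑ j ∈ Finset.range n, c * (1 + K) ^ j := by
          gcongr with j hj
          exact ih j (Finset.mem_range.mp hj)
      _ = c * (1 + K) ^ n := by
          have hgeom := geom_sum_mul (1 + K) n
          rw [add_sub_cancel_left] at hgeom
          rw [← Finset.mul_sum]
          linear_combination c * hgeom

section Jacobi

variable (a b : ℕ → ℝ)

lemma jacobiA_add (j : ℕ) (z w : ℂ) :
    jacobiA a b j (z + w) = jacobiA a b j z + Matrix.diagonal ![w / a j, 0] := by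
  ext i k; fin_cases i <;> fin_cases k <;> simp [jacobiA, add_div, add_sub_right_comm]

lemma det_jacobiA {j : ℕ} (ha : a j ≠ 0) (z : ℂ) : (jacobiA a b j z).det = 1 := by
  have ha' : (a j : ℂ) ≠ 0 := by exact_mod_cast ha
  rw [jacobiA, Matrix.det_fin_two_of]
  field_simp
  ring

variable {a}

lemma det_transfer (ha : ∀ j, a (j + 1) ≠ 0) (n : ℕ) (z : ℂ) : (transfer a b n z).det = 1 := by
  induction n with
  | zero => simp [transfer]
  | succ n ih => rw [transfer, Matrix.det_mul, ih, mul_one, det_jacobiA a b (ha n)]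

lemma transfer_add (ha : ∀ j, a (j + 1) ≠ 0) (n : ℕ) (z w : ℂ) :
    transfer a b n (z + w) = transfer a b n z * (1 + ∑ j ∈ Finset.range n,
      (transfer a b (j + 1) z)⁻¹ * Matrix.diagonal ![w / a (j + 1), 0] * transfer a b j (z + w)) := by
  have hunit (j : ℕ) : IsUnit (transfer a b j z).det := by rw [det_transfer b ha]; exact isUnit_one
  have key := Matrix.nonsing_inv_mul_eq_add_sum (A := fun j => jacobiA a b (j + 1) z)
    (B := fun j => Matrix.diagonal ![w / a (j + 1), 0]) (T := fun j => transfer a b j z)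
    (S := fun j => transfer a b j (z + w)) hunit (fun _ => rfl)
    (fun j => by simp only [transfer, jacobiA_add]) n
  rw [show transfer a b 0 z = 1 from rfl, show transfer a b 0 (z + w) = 1 from rfl, inv_one,
    Matrix.one_mul] at key
  rw [← key, Matrix.mul_nonsing_inv_cancel_left _ _ (hunit n)]

open Matrix in
lemma norm_transfer_add_le {x w : ℂ} {M α : ℝ} (hα : 0 < α) (hαa : ∀ j, α ≤ a (j + 1))
    (hM : ∀ m, ‖transfer a b m x‖ ≤ M) (n : ℕ) :
    ‖transfer a b n (x + w)‖ ≤ M * (1 + M ^ 2 * ‖w‖ / α) ^ n := by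
  have ha (j : ℕ) : a (j + 1) ≠ 0 := (hα.trans_le (hαa j)).ne'
  have hM0 : 0 ≤ M := (norm_nonneg _).trans (hM 0)
  have hterm (j : ℕ) : ‖(transfer a b (j + 1) x)⁻¹ * diagonal ![w / a (j + 1), 0] *
      transfer a b j (x + w)‖ ≤ M * (‖w‖ / α) * ‖transfer a b j (x + w)‖ := by
    have hinv : ‖(transfer a b (j + 1) x)⁻¹‖ ≤ M := by
      rw [l2_opNorm_inv_fin_two_of_det_eq_one (det_transfer b ha _ _)]
      exact hM _
    have hdiag : ‖diagonal ![w / a (j + 1), 0]‖ ≤ ‖w‖ / α := by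
      rw [l2_opNorm_diagonal_cons_zero, norm_div, Complex.norm_real,
        Real.norm_of_nonneg (hα.le.trans (hαa j))]
      gcongr
      exact hαa j
    calc _ ≤ ‖(transfer a b (j + 1) x)⁻¹‖ * ‖diagonal ![w / a (j + 1), 0]‖ *
          ‖transfer a b j (x + w)‖ :=
          (l2_opNorm_mul _ _).trans (mul_le_mul_of_nonneg_right (l2_opNorm_mul _ _) (norm_nonneg _))
      _ ≤ _ := by gcongr
  refine le_mul_one_add_pow_of_le_add_mul_sum (u := fun m => ‖transfer a b m (x + w)‖)
    (K := M ^ 2 * ‖w‖ / α) (by positivity) (fun m => ?_) n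
  calc ‖transfer a b m (x + w)‖
      ≤ M * (1 + ∑ j ∈ Finset.range m, M * (‖w‖ / α) * ‖transfer a b j (x + w)‖) := by
        rw [transfer_add b ha]
        refine (l2_opNorm_mul _ _).trans ?_
        gcongr
        · exact hM m
        · refine (norm_add_le _ _).trans ?_
          rw [norm_one]
          gcongr
          exact (norm_sum_le _ _).trans (Finset.sum_le_sum fun j _ => hterm j)
    _ = M + M ^ 2 * ‖w‖ / α * ∑ j ∈ Finset.range m, ‖transfer a b j (x + w)‖ := by
        rw [mul_add, mul_one, Finset.mul_sum, Finset.mul_sum]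
        congr 1
        exact Finset.sum_congr rfl fun j _ => by ring

end Jacobi

/-- **Theorem 3, second part** of Avila–Last–Simon: if `C = sup_n ‖T_n(x₀)‖² < ∞`, then for all
`z ∈ ℂ` and all `n`, `‖T_n(x₀ + z/(n+1))‖ ≤ C^{1/2} exp(C α₋⁻¹ |z|)`, where `α₋ = inf_n a_n > 0`
and `‖·‖` is the Euclidean operator norm. -/
theorem stmt_10 (a b : ℕ → ℝ) (hapos : ∀ n : ℕ, 0 < a (n + 1))
    (αm : ℝ) (hαm_pos : 0 < αm) (hαm : αm = ⨅ n : ℕ, a (n + 1))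
    (x₀ : ℝ) (C : ℝ)
    (hbdd : BddAbove (Set.range fun n : ℕ => ‖transfer a b n (x₀ : ℂ)‖ ^ 2))
    (hC : C = ⨆ n : ℕ, ‖transfer a b n (x₀ : ℂ)‖ ^ 2) :
    ∀ (z : ℂ) (n : ℕ),
      ‖transfer a b n ((x₀ : ℂ) + z / (n + 1))‖ ≤
        Real.sqrt C * Real.exp (C * αm⁻¹ * ‖z‖) := by
  have hsq (m : ℕ) : ‖transfer a b m (x₀ : ℂ)‖ ^ 2 ≤ C := hC ▸ le_ciSup hbdd m
  have hC0 : 0 ≤ C := (sq_nonneg _).trans (hsq 0)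
  have hαa (j : ℕ) : αm ≤ a (j + 1) := by
    rw [hαm]
    exact ciInf_le ⟨0, Set.forall_mem_range.2 fun n => (hapos n).le⟩ j
  intro z n
  have hnz : (n : ℝ) * ‖z / (n + 1)‖ ≤ ‖z‖ := by
    rw [norm_div, show ‖(n : ℂ) + 1‖ = n + 1 by norm_cast, mul_div_left_comm]
    refine mul_le_of_le_one_right (norm_nonneg z) ((div_le_one ?_).2 ?_) <;> linarith
  calc ‖transfer a b n ((x₀ : ℂ) + z / (n + 1))‖
      ≤ √C * (1 + √C ^ 2 * ‖z / (n + 1)‖ / αm) ^ n :=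
        norm_transfer_add_le b hαm_pos hαa (fun m => Real.le_sqrt_of_sq_le (hsq m)) n
    _ ≤ √C * Real.exp (C * ‖z / (n + 1)‖ / αm) ^ n := by
        rw [Real.sq_sqrt hC0]
        gcongr
        rw [add_comm]
        exact Real.add_one_le_exp _
    _ ≤ √C * Real.exp (C * αm⁻¹ * ‖z‖) := by
        rw [← Real.exp_nat_mul]
        gcongr ?_ * Real.exp ?_
        calc (n : ℝ) * (C * ‖z / (n + 1)‖ / αm) = C * αm⁻¹ * (n * ‖z / (n + 1)‖) := by ring
          _ ≤ C * αm⁻¹ * ‖z‖ := by gcongr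
end

section
/- (Product perturbation inequality (4.13), abstract form) Let A_1, …, A_n and Ã_1, …, Ã_n be 2×2 complex matrices with det A_k = 1 for every k. Set T_0 = T̃_0 = I, T_j = A_j ⋯ A_1 and T̃_j = Ã_j ⋯ Ã_1 for 1 ≤ j ≤ n. Then for every j ≤ n, ‖T̃_j‖ ≤ ‖T_j‖ · exp( Σ_{k=1}^{j} ‖T_k‖ ‖T_{k−1}‖ ‖Ã_k − A_k‖ ), where ‖·‖ is the operator norm on 2×2 complex matrices. -/
/-!
Variation of constants gives
`T̃_j = T_j + ∑_{k<j} T_j T_{k+1}⁻¹ (Ã_{k+1} - A_{k+1}) T̃_k`.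
A `2 × 2` matrix of determinant one has `M⁻¹ = adj M = J Mᵀ J*` with `J` the unitary rotation
by a right angle, so `‖M⁻¹‖ ≤ ‖M‖`. Taking norms yields
`‖T̃_j‖ ≤ ‖T_j‖ (1 + ∑_{k<j} ‖T_{k+1}‖ ‖Ã_{k+1} - A_{k+1}‖ ‖T̃_k‖)`,
and a discrete Grönwall argument turns this into the exponential bound.
-/

open scoped Matrix.Norms.L2Operator

lemma EuclideanSpace.norm_equiv_symm_star {𝕜 ι : Type*} [RCLike 𝕜] [Fintype ι] (v : ι → 𝕜) :
    ‖(EuclideanSpace.equiv ι 𝕜).symm (star v)‖ = ‖(EuclideanSpace.equiv ι 𝕜).symm v‖ := by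
  simp [EuclideanSpace.norm_eq]

namespace Matrix

variable {𝕜 : Type*} [RCLike 𝕜] {m n : Type*} [Fintype m] [Fintype n] [DecidableEq m]
  [DecidableEq n]

lemma l2_opNorm_transpose_le (A : Matrix m n 𝕜) : ‖Aᵀ‖ ≤ ‖A‖ := by
  refine ContinuousLinearMap.opNorm_le_bound _ (norm_nonneg A) fun x => ?_
  have hconj : Aᵀ *ᵥ x.ofLp = star (Aᴴ *ᵥ star x.ofLp) := by
    ext i
    simp [mulVec, dotProduct, conjTranspose_apply]
  calc _ = ‖(EuclideanSpace.equiv n 𝕜).symm (Aᴴ *ᵥ star x.ofLp)‖ := by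
        rw [← EuclideanSpace.norm_equiv_symm_star, ← hconj]; rfl
    _ ≤ ‖Aᴴ‖ * ‖(EuclideanSpace.equiv m 𝕜).symm (star x.ofLp)‖ := l2_opNorm_mulVec _ _
    _ = ‖A‖ * ‖x‖ := by rw [l2_opNorm_conjTranspose, EuclideanSpace.norm_equiv_symm_star]; rfl

lemma l2_opNorm_adjugate_fin_two_le (M : Matrix (Fin 2) (Fin 2) 𝕜) : ‖M.adjugate‖ ≤ ‖M‖ := by
  set J : Matrix (Fin 2) (Fin 2) 𝕜 := !![0, 1; -1, 0]
  have hJ : J ∈ unitary (Matrix (Fin 2) (Fin 2) 𝕜) := by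
    rw [Unitary.mem_iff]
    constructor <;> ext i j <;> fin_cases i <;> fin_cases j <;>
      simp [J, star_eq_conjTranspose, mul_apply, Fin.sum_univ_two, conjTranspose_apply]
  have hadj : M.adjugate = J * Mᵀ * star J := by
    rw [adjugate_fin_two]
    ext i j; fin_cases i <;> fin_cases j <;>
      simp [J, star_eq_conjTranspose, mul_apply, Fin.sum_univ_two, conjTranspose_apply, vecMul,
        dotProduct]
  rw [hadj, CStarRing.norm_mul_mem_unitary _ (Unitary.star_mem hJ),
    CStarRing.norm_mem_unitary_mul _ hJ]
  exact l2_opNorm_transpose_le M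

lemma l2_opNorm_inv_le_of_det_eq_one {M : Matrix (Fin 2) (Fin 2) 𝕜} (h : M.det = 1) :
    ‖M⁻¹‖ ≤ ‖M‖ := by
  simpa [inv_def, h] using l2_opNorm_adjugate_fin_two_le M

variable {R : Type*} [CommRing R] {ι : Type*} [Fintype ι] [DecidableEq ι]

lemma perturbed_eq_add_sum (n : ℕ) (A A' T T' : ℕ → Matrix ι ι R)
    (hunit : ∀ k ≤ n, IsUnit (T k).det) (h0 : T' 0 = T 0)
    (hT : ∀ k < n, T (k + 1) = A (k + 1) * T k) (hT' : ∀ k < n, T' (k + 1) = A' (k + 1) * T' k) :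
    ∀ j ≤ n, T' j = T j +
      ∑ k ∈ Finset.range j, T j * (T (k + 1))⁻¹ * (A' (k + 1) - A (k + 1)) * T' k := by
  intro j
  induction j with
  | zero => simp [h0]
  | succ j ih =>
    intro hj
    have hinv : T (j + 1) * (T (j + 1))⁻¹ = 1 := mul_nonsing_inv _ (hunit _ hj)
    calc T' (j + 1) = A (j + 1) * T' j + (A' (j + 1) - A (j + 1)) * T' j := by
          rw [hT' j hj, sub_mul, add_sub_cancel]
      _ = _ := by
          nth_rw 1 [ih (by omega)]
          rw [Finset.sum_range_succ, hinv, one_mul, mul_add, Finset.mul_sum, ← hT j hj, add_assoc]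
          simp only [← mul_assoc, hT j hj]

lemma norm_perturbed_le (n : ℕ) (A A' T T' : ℕ → Matrix ι ι 𝕜)
    (hunit : ∀ k ≤ n, IsUnit (T k).det) (h0 : T' 0 = T 0)
    (hT : ∀ k < n, T (k + 1) = A (k + 1) * T k) (hT' : ∀ k < n, T' (k + 1) = A' (k + 1) * T' k) :
    ∀ j ≤ n, ‖T' j‖ ≤ ‖T j‖ *
      (1 + ∑ k ∈ Finset.range j, ‖(T (k + 1))⁻¹‖ * ‖A' (k + 1) - A (k + 1)‖ * ‖T' k‖) := by
  intro j hj
  rw [perturbed_eq_add_sum n A A' T T' hunit h0 hT hT' j hj, mul_add, mul_one, Finset.mul_sum]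
  refine (norm_add_le _ _).trans ?_
  gcongr
  refine (norm_sum_le _ _).trans ?_
  gcongr with k
  simp only [← mul_assoc]
  refine (norm_mul_le _ _).trans (mul_le_mul_of_nonneg_right ?_ (norm_nonneg _))
  refine (norm_mul_le _ _).trans (mul_le_mul_of_nonneg_right ?_ (norm_nonneg _))
  exact norm_mul_le _ _

end Matrix

section

open Finset

lemma one_add_sum_mul_exp_le_exp (d : ℕ → ℝ) (j : ℕ) :
    1 + ∑ k ∈ range j, d k * Real.exp (∑ i ∈ range k, d i) ≤ Real.exp (∑ k ∈ range j, d k) := by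
  induction j with
  | zero => simp
  | succ j ih =>
    rw [sum_range_succ, sum_range_succ, Real.exp_add, ← add_assoc]
    calc _ ≤ Real.exp (∑ k ∈ range j, d k) * (1 + d j) := by linarith
      _ ≤ Real.exp (∑ k ∈ range j, d k) * Real.exp (d j) := by
          gcongr
          linarith [Real.add_one_le_exp (d j)]

lemma le_mul_exp_of_le_mul_one_add_sum (n : ℕ) (a b u : ℕ → ℝ) (ha : ∀ j, 0 ≤ a j)
    (hb : ∀ k, 0 ≤ b k)
    (hu : ∀ j ≤ n, u j ≤ a j * (1 + ∑ k ∈ range j, b k * u k)) :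
    ∀ j ≤ n, u j ≤ a j * Real.exp (∑ k ∈ range j, b k * a k) := by
  intro j
  induction j using Nat.strong_induction_on with
  | _ j ih =>
    intro hj
    calc u j ≤ a j * (1 + ∑ k ∈ range j, b k * u k) := hu j hj
      _ ≤ a j * (1 + ∑ k ∈ range j, b k * (a k * Real.exp (∑ i ∈ range k, b i * a i))) := by
          gcongr with k hk
          · exact ha j
          · exact hb k
          · exact ih k (mem_range.mp hk) (by grind)
      _ ≤ a j * Real.exp (∑ k ∈ range j, b k * a k) := by
          simp only [← mul_assoc]
          exact mul_le_mul_of_nonneg_left (one_add_sum_mul_exp_le_exp _ j) (ha j)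

end

/-- **Product perturbation inequality (4.13)** of Avila–Last–Simon, abstract form.  If
`A_1, …, A_n` are `2 × 2` complex matrices of determinant one, `Ã_1, …, Ã_n` arbitrary,
`T_j = A_j ⋯ A_1`, `T̃_j = Ã_j ⋯ Ã_1` (with `T_0 = T̃_0 = I`), then
`‖T̃_j‖ ≤ ‖T_j‖ exp(Σ_{k=1}^{j} ‖T_k‖ ‖T_{k-1}‖ ‖Ã_k - A_k‖)` for every `j ≤ n`, where `‖·‖`
is the Euclidean operator norm. -/
theorem stmt_11 (n : ℕ) (A A' : ℕ → Matrix (Fin 2) (Fin 2) ℂ)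
    (hdet : ∀ k : ℕ, 1 ≤ k → k ≤ n → (A k).det = 1)
    (T T' : ℕ → Matrix (Fin 2) (Fin 2) ℂ)
    (hT0 : T 0 = 1) (hT'0 : T' 0 = 1)
    (hT : ∀ k : ℕ, k < n → T (k + 1) = A (k + 1) * T k)
    (hT' : ∀ k : ℕ, k < n → T' (k + 1) = A' (k + 1) * T' k) :
    ∀ j : ℕ, j ≤ n →
      ‖T' j‖ ≤ ‖T j‖ *
        Real.exp (∑ k ∈ Finset.range j, ‖T (k + 1)‖ * ‖T k‖ * ‖A' (k + 1) - A (k + 1)‖) := by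
  have hdetT : ∀ j ≤ n, (T j).det = 1 := by
    intro j
    induction j with
    | zero => simp [hT0]
    | succ j ih =>
      intro hj
      rw [hT j hj, Matrix.det_mul, hdet (j + 1) (by omega) hj, ih (by omega), one_mul]
  have hbound : ∀ j ≤ n, ‖T' j‖ ≤ ‖T j‖ *
      (1 + ∑ k ∈ Finset.range j, ‖T (k + 1)‖ * ‖A' (k + 1) - A (k + 1)‖ * ‖T' k‖) := by
    intro j hj
    refine (Matrix.norm_perturbed_le n A A' T T' (fun k hk => by simp [hdetT k hk])
      (hT'0.trans hT0.symm) hT hT' j hj).trans ?_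
    gcongr with k hk
    exact Matrix.l2_opNorm_inv_le_of_det_eq_one (hdetT _ (by grind))
  intro j hj
  convert le_mul_exp_of_le_mul_one_add_sum n (fun j => ‖T j‖) _ (fun j => ‖T' j‖)
    (fun _ => norm_nonneg _) (fun _ => by positivity) hbound j hj using 4 with k
  ring
end
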